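/- arXiv:0809.1395 — 3 statements merged into one kernel-verified Lean document; each statement's English description precedes it below -/
import Mathlib

section
/- The G12-lattice A_2(G12) is generated as a Z[G12]-module by the three elements u12 = (σ2−1)d1 − (σ1−1)d2, b1 = N1·d1 and b2 = N2·d2. -/
open MonoidAlgebra

set_option maxHeartbeats 1000000
set_option synthInstance.maxHeartbeats 400000

noncomputable section

/-! ## Generic (unbundled) group-cohomology notions in low degree -/

/-- `f : G → A` is a 1-cocycle for the (unbundled) action `act`. -/
def IsOneCocycle {G : Type*} [Group G] {A : Type*} [AddCommGroup A]
    (act : G → A → A) (f : G → A) : Prop :=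
  ∀ g h : G, f (g * h) = act g (f h) + f g

/-- `f : G → A` is a 1-coboundary for the (unbundled) action `act`. -/
def IsOneCoboundary {G : Type*} [Group G] {A : Type*} [AddCommGroup A]
    (act : G → A → A) (f : G → A) : Prop :=
  ∃ a : A, ∀ g : G, f g = act g a - a

/-- `f : G → G → A` is a 2-coboundary for the (unbundled) action `act`. -/
def IsTwoCoboundary {G : Type*} [Group G] {A : Type*} [AddCommGroup A]
    (act : G → A → A) (f : G → G → A) : Prop :=
  ∃ c : G → A, ∀ g h : G, f g h = act g (c h) - c (g * h) + c g

/-- restriction of an (unbundled) action to a subgroup. -/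
def resAct {G : Type*} [Group G] {A : Type*} (H : Subgroup G) (act : G → A → A) :
    H → A → A := fun h => act (h : G)

/-! ## Augmentation ideal for a general group -/

/-- the augmentation map `Z[G] → Z`. -/
def augGen (G : Type*) [Group G] : MonoidAlgebra ℤ G →+* ℤ :=
  (MonoidAlgebra.lift ℤ ℤ G 1).toRingHom

/-- the augmentation ideal `I[G] ⊆ Z[G]`. -/
def IGen (G : Type*) [Group G] : Ideal (MonoidAlgebra ℤ G) := RingHom.ker (augGen G)

/-- the action of `G` on `I[G]` by left multiplication. -/
def actIGen (G : Type*) [Group G] (g : G) (y : ↥(IGen G)) : ↥(IGen G) :=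
  ⟨of ℤ G g * y.val, by
    have h0 : augGen G y.val = 0 := y.2
    simp [IGen, RingHom.mem_ker, map_mul, h0]⟩

/-- the distinguished 1-cocycle `d_H : H → I[G]`, `h ↦ h - 1`. -/
def dGen {G : Type*} [Group G] (H : Subgroup G) (h : H) : ↥(IGen G) :=
  ⟨of ℤ G (h : G) - 1, by simp [IGen, RingHom.mem_ker, map_sub, augGen]⟩

/-! ## The groups of the paper -/

/-- the elementary abelian group `G₁₂` of order `p²`. -/
abbrev G12t (p : ℕ) := Multiplicative (ZMod p × ZMod p)
/-- a cyclic group of order `p`. -/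
abbrev Cpt (p : ℕ) := Multiplicative (ZMod p)
/-- the elementary abelian group `G = ⟨σ₁⟩ × ⟨σ₂⟩ × ⟨σ₃⟩ × ⟨σ₄⟩` of order `p⁴`. -/
abbrev Gp (p : ℕ) := Multiplicative (ZMod p × ZMod p × ZMod p × ZMod p)

def t1 (p : ℕ) : G12t p := Multiplicative.ofAdd (1, 0)
def t2 (p : ℕ) : G12t p := Multiplicative.ofAdd (0, 1)
def c1g (p : ℕ) : Cpt p := Multiplicative.ofAdd 1
def s1 (p : ℕ) : Gp p := Multiplicative.ofAdd (1, 0, 0, 0)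
def s2 (p : ℕ) : Gp p := Multiplicative.ofAdd (0, 1, 0, 0)
def s3 (p : ℕ) : Gp p := Multiplicative.ofAdd (0, 0, 1, 0)
def s4 (p : ℕ) : Gp p := Multiplicative.ofAdd (0, 0, 0, 1)

/-- the group ring `Z[G₁₂]`. -/
abbrev R12 (p : ℕ) := MonoidAlgebra ℤ (G12t p)
/-- the group ring `Z[⟨σ⟩]` of a cyclic group of order `p`. -/
abbrev RCp (p : ℕ) := MonoidAlgebra ℤ (Cpt p)
/-- the group ring `Z[G]`. -/
abbrev RG (p : ℕ) := MonoidAlgebra ℤ (Gp p)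

/-- the quotient map `G → G₁₂ = G/G₃₄`. -/
def π12 (p : ℕ) : Gp p →* G12t p :=
  AddMonoidHom.toMultiplicative
    { toFun := fun v => (v.1, v.2.1), map_zero' := rfl, map_add' := fun _ _ => rfl }

/-- the quotient map `G → ⟨σ₃⟩ = G/⟨σ₁,σ₂,σ₄⟩`. -/
def π3 (p : ℕ) : Gp p →* Cpt p :=
  AddMonoidHom.toMultiplicative
    { toFun := fun v => v.2.2.1, map_zero' := rfl, map_add' := fun _ _ => rfl }

/-- the quotient map `G → ⟨σ₄⟩ = G/⟨σ₁,σ₂,σ₃⟩`. -/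
def π4 (p : ℕ) : Gp p →* Cpt p :=
  AddMonoidHom.toMultiplicative
    { toFun := fun v => v.2.2.2, map_zero' := rfl, map_add' := fun _ _ => rfl }

/-- the inclusion `G₁₂ → G`. -/
def emb12 (p : ℕ) : G12t p →* Gp p :=
  AddMonoidHom.toMultiplicative
    { toFun := fun v => (v.1, v.2, 0, 0), map_zero' := rfl,
      map_add' := fun _ _ => by ext <;> simp }

/-- the subgroup `G₁₂ = ⟨σ₁, σ₂⟩ ≤ G`. -/
def G12sub (p : ℕ) : Subgroup (Gp p) := Subgroup.closure {s1 p, s2 p}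
/-- the subgroup `G₃₄ = ⟨σ₃, σ₄⟩ ≤ G`. -/
def G34sub (p : ℕ) : Subgroup (Gp p) := Subgroup.closure {s3 p, s4 p}

/-! ## The lattice `A₂(G₁₂)` and its distinguished elements -/

/-- the map `Z[G₁₂]·d₁ ⊕ Z[G₁₂]·d₂ → I[G₁₂] ⊆ Z[G₁₂]`, `dᵢ ↦ σᵢ - 1`. -/
def d12map (p : ℕ) : (R12 p × R12 p) →ₗ[R12 p] R12 p :=
  (LinearMap.toSpanSingleton (R12 p) (R12 p) (of ℤ (G12t p) (t1 p) - 1)).comp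
      (LinearMap.fst (R12 p) (R12 p) (R12 p)) +
  (LinearMap.toSpanSingleton (R12 p) (R12 p) (of ℤ (G12t p) (t2 p) - 1)).comp
      (LinearMap.snd (R12 p) (R12 p) (R12 p))

/-- the lattice `A₂(G₁₂)`, the kernel of `Z[G₁₂]·d₁ ⊕ Z[G₁₂]·d₂ → I[G₁₂]`. -/
def A2G12 (p : ℕ) : Submodule (R12 p) (R12 p × R12 p) := LinearMap.ker (d12map p)

/-- `u₁₂ = (σ₂-1)d₁ - (σ₁-1)d₂` as an element of `Z[G₁₂]·d₁ ⊕ Z[G₁₂]·d₂`. -/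
def u12raw (p : ℕ) : R12 p × R12 p :=
  (of ℤ (G12t p) (t2 p) - 1, -(of ℤ (G12t p) (t1 p) - 1))

/-- the norm element `N = 1 + g + ⋯ + g^(p-1)` of a group ring. -/
def NN (p : ℕ) {G : Type*} [CommGroup G] (g : G) : MonoidAlgebra ℤ G :=
  ∑ k ∈ Finset.range p, of ℤ G g ^ k

/-- `b₁ = N₁·d₁`. -/
def b1raw (p : ℕ) : R12 p × R12 p := (NN p (t1 p), 0)
/-- `b₂ = N₂·d₂`. -/
def b2raw (p : ℕ) : R12 p × R12 p := (0, NN p (t2 p))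

lemma ofAdd_pow_p (p : ℕ) {A : Type*} [AddCommGroup A] (a : A) (h : p • a = 0) :
    (Multiplicative.ofAdd a) ^ p = 1 := by
  rw [← ofAdd_nsmul, h]; rfl

lemma zmod_p_smul (p : ℕ) (x : ZMod p) : p • x = 0 := by
  rw [nsmul_eq_mul, ZMod.natCast_self, zero_mul]

lemma t1_pow_p (p : ℕ) : (t1 p) ^ p = 1 := by
  refine ofAdd_pow_p p _ ?_
  rw [Prod.smul_mk, zmod_p_smul, zmod_p_smul]; rfl

lemma t2_pow_p (p : ℕ) : (t2 p) ^ p = 1 := by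
  refine ofAdd_pow_p p _ ?_
  rw [Prod.smul_mk, zmod_p_smul, zmod_p_smul]; rfl

lemma c1g_pow_p (p : ℕ) : (c1g p) ^ p = 1 := by
  refine ofAdd_pow_p p _ (zmod_p_smul p _)

lemma NN_mul (p : ℕ) {G : Type*} [CommGroup G] (g : G) (h : g ^ p = 1) :
    NN p g * (of ℤ G g - 1) = 0 := by
  rw [NN, geom_sum_mul, ← map_pow, h, map_one, sub_self]

lemma u12raw_mem (p : ℕ) : u12raw p ∈ A2G12 p := by
  simp only [A2G12, LinearMap.mem_ker, d12map, LinearMap.add_apply, LinearMap.comp_apply,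
    LinearMap.fst_apply, LinearMap.snd_apply, LinearMap.toSpanSingleton_apply, u12raw,
    smul_eq_mul]
  ring

lemma b1raw_mem (p : ℕ) : b1raw p ∈ A2G12 p := by
  simp only [A2G12, LinearMap.mem_ker, d12map, LinearMap.add_apply, LinearMap.comp_apply,
    LinearMap.fst_apply, LinearMap.snd_apply, LinearMap.toSpanSingleton_apply, b1raw,
    smul_eq_mul, zero_mul, add_zero]
  exact NN_mul p _ (t1_pow_p p)

lemma b2raw_mem (p : ℕ) : b2raw p ∈ A2G12 p := by
  simp only [A2G12, LinearMap.mem_ker, d12map, LinearMap.add_apply, LinearMap.comp_apply,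
    LinearMap.fst_apply, LinearMap.snd_apply, LinearMap.toSpanSingleton_apply, b2raw,
    smul_eq_mul, zero_mul, zero_add]
  exact NN_mul p _ (t2_pow_p p)

/-- `u₁₂` as an element of `A₂(G₁₂)`. -/
def u12e (p : ℕ) : ↥(A2G12 p) := ⟨u12raw p, u12raw_mem p⟩
/-- `b₁` as an element of `A₂(G₁₂)`. -/
def b1e (p : ℕ) : ↥(A2G12 p) := ⟨b1raw p, b1raw_mem p⟩
/-- `b₂` as an element of `A₂(G₁₂)`. -/
def b2e (p : ℕ) : ↥(A2G12 p) := ⟨b2raw p, b2raw_mem p⟩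

/-- the action of `G₁₂` on `A₂(G₁₂)`. -/
def actA2 (p : ℕ) (x : G12t p) (v : ↥(A2G12 p)) : ↥(A2G12 p) :=
  of ℤ (G12t p) x • v

/-! ## The cyclic lattice `A₂(⟨σ⟩)` -/

/-- the map `Z[⟨σ⟩]·d → I[⟨σ⟩]`, `d ↦ σ - 1`. -/
def dcmap (p : ℕ) : RCp p →ₗ[RCp p] RCp p :=
  LinearMap.toSpanSingleton (RCp p) (RCp p) (of ℤ (Cpt p) (c1g p) - 1)

/-- the lattice `A₂(⟨σ⟩)` for a cyclic group of order `p`. -/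
def A2C (p : ℕ) : Submodule (RCp p) (RCp p) := LinearMap.ker (dcmap p)

/-- the norm element `N = 1 + σ + ⋯ + σ^(p-1)` as an element of `A₂(⟨σ⟩)`. -/
def NCe (p : ℕ) : ↥(A2C p) :=
  ⟨NN p (c1g p), by
    simp only [A2C, LinearMap.mem_ker, dcmap, LinearMap.toSpanSingleton_apply, smul_eq_mul]
    exact NN_mul p _ (c1g_pow_p p)⟩

/-- the action of `G` on `A₂(⟨σⱼ⟩)` through a projection `π : G → ⟨σⱼ⟩`. -/
def actCvia (p : ℕ) (π : Gp p →* Cpt p) (g : Gp p) (v : ↥(A2C p)) : ↥(A2C p) :=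
  of ℤ (Cpt p) (π g) • v

/-! ## The explicit canonical 2-cocycles -/

/-- the elements `u_{m,n} ∈ A₂(G₁₂)` (equation (13) of the paper). -/
def umn (p : ℕ) (m1 m2 n1 n2 : ℕ) : ↥(A2G12 p) :=
  (-(of ℤ (G12t p) (t1 p ^ m1) * ∑ j ∈ Finset.range n1, ∑ i ∈ Finset.range m2,
      of ℤ (G12t p) (t1 p ^ i * t2 p ^ j))) • u12e p +
  (of ℤ (G12t p) (t1 p ^ n1) * ∑ j ∈ Finset.range n2, ∑ i ∈ Finset.range m1,
      of ℤ (G12t p) (t1 p ^ i * t2 p ^ j)) • u12e p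

/-- the explicit 2-cocycle `c₁₂` representing the canonical class `[c_{G₁₂}]`. -/
def c12coc (p : ℕ) (x y : G12t p) : ↥(A2G12 p) :=
  let m1 := (Multiplicative.toAdd x).1.val
  let m2 := (Multiplicative.toAdd x).2.val
  let n1 := (Multiplicative.toAdd y).1.val
  let n2 := (Multiplicative.toAdd y).2.val
  of ℤ (G12t p) (t1 p ^ m1) • umn p 0 m2 n1 0 +
    ((m1 + n1) / p) • b1e p +
    ((m2 + n2) / p) • (of ℤ (G12t p) (t1 p ^ ((m1 + n1) % p)) • b2e p)

/-- the explicit 2-cocycle representing the canonical class of a cyclic group of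
order `p` with coefficients in `A₂(⟨σ⟩)`. -/
def ccyc (p : ℕ) (x y : Cpt p) : ↥(A2C p) :=
  if p ≤ (Multiplicative.toAdd x).val + (Multiplicative.toAdd y).val then NCe p else 0

/-! ## The lattice `Q = A₂(G₁₂) ⊕ K₃ ⊕ K₄` -/

/-- `K_j = A₂(⟨σⱼ⟩) ⊕ Z[⟨σⱼ⟩]`. -/
abbrev Kc (p : ℕ) := ↥(A2C p) × RCp p

/-- the carrier of the `G`-lattice `Q = A₂(G₁₂) ⊕ K₃ ⊕ K₄`. -/
abbrev Qc (p : ℕ) := ↥(A2G12 p) × Kc p × Kc p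

/-- the action of `G` on `Q`: `G₁₂` acts naturally on `A₂(G₁₂)` and trivially on
`K₃`, `K₄`; `⟨σⱼ⟩` acts naturally on `K_j` and trivially elsewhere. -/
def actQ (p : ℕ) (g : Gp p) (q : Qc p) : Qc p :=
  (of ℤ (G12t p) (π12 p g) • q.1,
   (of ℤ (Cpt p) (π3 p g) • q.2.1.1, of ℤ (Cpt p) (π3 p g) * q.2.1.2),
   (of ℤ (Cpt p) (π4 p g) • q.2.2.1, of ℤ (Cpt p) (π4 p g) * q.2.2.2))

/-- the 2-cocycle `ω = inf(c₁₂) - inf(c₃) - inf(c₄)` with values in `Q`. -/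
def ωc (p : ℕ) (g g' : Gp p) : Qc p :=
  (c12coc p (π12 p g) (π12 p g'),
   (-(ccyc p (π3 p g) (π3 p g')), 0),
   (-(ccyc p (π4 p g) (π4 p g')), 0))

/-- the order of the restriction of `[ω]` to a subgroup `H ≤ G` in `H²(H, Q)`. -/
def nOrd (p : ℕ) (H : Subgroup (Gp p)) : ℕ :=
  sInf {n : ℕ | 0 < n ∧
    IsTwoCoboundary (resAct H (actQ p)) fun h h' => n • ωc p (h : Gp p) (h' : Gp p)}

/-! ## The augmentation ideal `I[G]` and the lattice `M_ω` -/

/-- the augmentation map `Z[G] → Z`. -/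
def aug (p : ℕ) : RG p →+* ℤ := (MonoidAlgebra.lift ℤ ℤ (Gp p) 1).toRingHom

/-- the augmentation ideal `I[G]`. -/
def IG (p : ℕ) : Ideal (RG p) := RingHom.ker (aug p)

/-- the action of `G` on `I[G]` by left multiplication. -/
def actIG (p : ℕ) (g : Gp p) (y : ↥(IG p)) : ↥(IG p) :=
  ⟨of ℤ (Gp p) g * y.val, by
    have h0 : aug p y.val = 0 := y.2
    simp [IG, RingHom.mem_ker, map_mul, h0]⟩

/-- the 1-cocycle `d_H : H → I[G]`, `h ↦ h - 1`. -/
def dH (p : ℕ) (H : Subgroup (Gp p)) (h : H) : ↥(IG p) :=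
  ⟨of ℤ (Gp p) (h : Gp p) - 1, by simp [IG, RingHom.mem_ker, map_sub, aug]⟩

/-- the carrier of the `G`-lattice `M_ω = Q ⊕ I[G]`. -/
abbrev Mc (p : ℕ) := Qc p × ↥(IG p)

/-- the `Q`-valued correction term of the twisted action on `M_ω`:
`θ(g, Σ a_{g'} g') = Σ a_{g'} ω(g, g')`; on `y ∈ I[G]` (so `Σ a_{g'} = 0` and
`y = Σ a_{g'} (g' - 1)`) this is the `Q`-component of `g·(0, y)`. -/
def θω (p : ℕ) (g : Gp p) (y : RG p) : Qc p :=
  Finsupp.sum y.coeff fun g' a => a • ωc p g g'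

/-- the twisted action of `G` on `M_ω = Q ⊕ I[G]`: `g(x,0) = (gx, 0)` and
`g(0, g'-1) = (ω(g,g'), g(g'-1))`, extended `Z`-linearly. -/
def actM (p : ℕ) (g : Gp p) (m : Mc p) : Mc p :=
  (actQ p g m.1 + θω p g m.2.val, actIG p g m.2)

/-! ## The map `π : A₂(G₁₂) → Z/pZ` -/

/-- the `G₁₂`-module homomorphism `π : A₂(G₁₂) → Z/pZ`, determined by
`π(x·u₁₂ + y·b₁ + z·b₂) = ε(x) mod p`; concretely it sends `v = (v₁, v₂)` to
`Σ_g v₁(g)·(exponent of σ₂ in g)`. -/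
def πmap (p : ℕ) (v : ↥(A2G12 p)) : ZMod p :=
  Finsupp.sum (v : R12 p × R12 p).1.coeff fun g a => (a : ZMod p) * (Multiplicative.toAdd g).2

/-! ## The set `𝓗` of subgroups, the cochains `v_H`, and the lattice `M` -/

/-- the set of subgroups `𝓗 = {G} ∪ {⟨τ, σ₃, σ₄⟩ : τ ∈ G₁₂}`. -/
def HH (p : ℕ) : Set (Subgroup (Gp p)) :=
  insert ⊤ {H | ∃ τ ∈ G12sub p, H = Subgroup.closure {τ, s3 p, s4 p}}

/-- the 1-cochain `v_H : H₁₂ → A₂(G₁₂)`, `v_H(h̄₁) = Σ_{h̄ ∈ H₁₂} c₁₂(h̄₁, h̄)`,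
here inflated to a function of `h̄₁ ∈ G₁₂`. -/
def vH (p : ℕ) (H : Subgroup (Gp p)) (x : G12t p) : ↥(A2G12 p) :=
  ∑ᶠ h' : ↥(H.map (π12 p)), c12coc p x (h' : G12t p)

/-- the 1-cochain `f_H : H → M_ω`, `f_H(h) = (z_H(h) - v_H(h̄), n_H·(h-1))`,
built from a choice of 1-cochain `z_H : H → K₃ ⊕ K₄`. -/
def fHof (p : ℕ) (H : Subgroup (Gp p)) (zH : H → Kc p × Kc p) (h : H) : Mc p :=
  ((-(vH p H (π12 p (h : Gp p))), (zH h).1, (zH h).2),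
   (nOrd p H) • dH p H h)

/-- the carrier of the permutation lattice `P = ⊕_{H ∈ 𝓗} Z[G/H]`. -/
abbrev Pc (p : ℕ) := ∀ H : ↥(HH p), ((Gp p ⧸ (H : Subgroup (Gp p))) →₀ ℤ)

/-- the carrier of the `G`-lattice `M = M_ω ⊕ P`. -/
abbrev MC (p : ℕ) := Mc p × Pc p

/-- the action of `G` on `M = M_ω ⊕ P`, twisted by a family of 1-cocycles
`f_H : H → M_ω` (`H ∈ 𝓗`): `g(x, 0) = (gx, 0)` and
`g(0, u_{gᵢH}) = (gⱼ·f_H(h), u_{gⱼH})` where `g·gᵢ = gⱼ·h`, `h ∈ H`, and the coset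
representatives are chosen by `Quotient.out`. -/
def actMFull (p : ℕ) (fH : ∀ H : ↥(HH p), (↥(H.val) → Mc p))
    (g : Gp p) (m : MC p) : MC p :=
  (actM p g m.1 +
     ∑ᶠ H : ↥(HH p), Finsupp.sum (m.2 H) fun c a =>
       a • actM p (Quotient.out (g • c))
         (fH H ⟨(Quotient.out (g • c))⁻¹ * (g * Quotient.out c), by
            rw [← QuotientGroup.eq, QuotientGroup.out_eq', ← smul_eq_mul,
              MulAction.Quotient.mk_smul_out]⟩),
   fun H => Finsupp.mapDomain (fun c => g • c) (m.2 H))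

/-- the map `π' : M → Z/pZ`, `(x₀, x₁, x₂, y, z) ↦ π(x₀)`. -/
def πmap' (p : ℕ) (m : MC p) : ZMod p := πmap p m.1.1.1

/-- the norm element `N₃₄ = Σ_{g ∈ G₃₄} g ∈ Z[G]`. -/
def N34 (p : ℕ) : RG p := ∑ᶠ g : ↥(G34sub p), of ℤ (Gp p) (g : Gp p)

/-- the augmentation map `Z[G₁₂] → Z`. -/
def aug12 (p : ℕ) : R12 p →+* ℤ := (MonoidAlgebra.lift ℤ ℤ (G12t p) 1).toRingHom

/-! Write `x = σ₁`, `y = σ₂`, and let `ρ : G₁₂ → G₁₂` be the retraction onto `⟨σ₁⟩` killing `σ₂`.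
The induced ring endomorphism `ρ_*` of `Z[G₁₂]` satisfies `f ≡ ρ_* f (mod y - 1)` and
`ρ_* N₂ = p`. Given `(a, b) ∈ A₂(G₁₂)`, subtracting a multiple of `u₁₂` makes `a` fixed by `ρ_*`.
Multiplying `a(x - 1) + b(y - 1) = 0` by `N₂` gives `a(x - 1)N₂ = 0`, and applying `ρ_*` turns
this into `p·a(x - 1) = 0`; hence `a(x - 1) = 0 = b(y - 1)`. Finally, an element of `Z[G]` killed
by `g - 1`, for `g` of finite order `n`, is a multiple of `1 + g + ⋯ + g^(n-1)`: so `a` is a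
multiple of `N₁` and `b` one of `N₂`. -/

section CommGroupRing

variable {G : Type*} [CommGroup G]

lemma coeff_mul_pow_of_mul_of_eq_self {f : MonoidAlgebra ℤ G} {g : G} (hf : f * of ℤ G g = f)
    (h : G) (k : ℕ) : f.coeff (h * g ^ k) = f.coeff h := by
  induction k with
  | zero => rw [pow_zero, mul_one]
  | succ k ih =>
    conv_lhs => rw [← hf]
    rw [pow_succ, ← mul_assoc, of_apply, coeff_mul_single_mul, mul_one, ih]

theorem exists_eq_mul_NN_of_mul_sub_one_eq_zero {g : G} {n : ℕ} (hg : orderOf g = n)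
    (hn : n ≠ 0) {f : MonoidAlgebra ℤ G} (hf : f * (of ℤ G g - 1) = 0) :
    ∃ f', f = f' * NN n g := by
  classical
  have hinv : f * of ℤ G g = f := by linear_combination hf
  set rep : G → G := fun h => (h : G ⧸ Subgroup.zpowers g).out
  refine ⟨.ofCoeff (f.coeff.filter fun h => rep h = h), ?_⟩
  ext h
  have hfin : IsOfFinOrder g := orderOf_pos_iff.1 (hg ▸ Nat.pos_of_ne_zero hn)
  obtain ⟨i, hi, hhi⟩ : ∃ i < n, rep h * g ^ i = h := by
    have : (rep h)⁻¹ * h ∈ Subgroup.zpowers g := QuotientGroup.eq.1 (by simp [rep])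
    obtain ⟨i, hi, hgi⟩ := Finset.mem_image.1 (hfin.mem_zpowers_iff_mem_range_orderOf.1 this)
    exact ⟨i, hg ▸ Finset.mem_range.1 hi, by rw [hgi, mul_inv_cancel_left]⟩
  have hterm : ∀ j ∈ Finset.range n,
      (MonoidAlgebra.ofCoeff (f.coeff.filter fun h => rep h = h)).coeff (h * (g ^ j)⁻¹) =
        if j = i then f.coeff h else 0 := by
    intro j hj
    have hrep : rep (h * (g ^ j)⁻¹) = rep h := congrArg Quotient.out (QuotientGroup.eq.2 (by simp))
    simp only [Finsupp.filter_apply, hrep]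
    generalize rep h = r at hhi ⊢
    subst hhi
    by_cases hji : j = i
    · subst hji
      rw [mul_inv_cancel_right, if_pos rfl, if_pos rfl, coeff_mul_pow_of_mul_of_eq_self hinv]
    · rw [if_neg hji, if_neg]
      rw [eq_mul_inv_iff_mul_eq, mul_right_inj]
      exact fun h => hji (pow_injOn_Iio_orderOf (hg ▸ Finset.mem_range.1 hj) (hg ▸ hi) h)
  rw [NN, Finset.mul_sum, MonoidAlgebra.coeff_sum, Finset.sum_apply',
    Finset.sum_congr rfl fun j hj => by
      rw [← map_pow, of_apply, coeff_mul_single_apply, mul_one, hterm j hj],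
    Finset.sum_ite_eq', if_pos (Finset.mem_range.2 hi)]

lemma sub_one_dvd_sub_mapDomainRingHom {ρ : G →* G} {g : G}
    (hρ : ∀ h, ∃ k : ℕ, h = ρ h * g ^ k) (f : MonoidAlgebra ℤ G) :
    of ℤ G g - 1 ∣ f - mapDomainRingHom ℤ ρ f := by
  induction f using MonoidAlgebra.induction_linear with
  | zero => simp
  | add f₁ f₂ h₁ h₂ => rw [map_add, add_sub_add_comm]; exact dvd_add h₁ h₂
  | single h c =>
    obtain ⟨k, hk⟩ := hρ h
    have : single h c - single (ρ h) c = single (ρ h) c * (of ℤ G g ^ k - 1) := by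
      rw [mul_sub, mul_one, ← map_pow, of_apply, single_mul_single, mul_one, ← hk]
    rw [mapDomainRingHom_apply, mapDomain_single, this]
    exact (sub_one_dvd_pow_sub_one _ k).mul_left _

lemma mapDomainRingHom_NN {ρ : G →* G} {g : G} (hg : ρ g = 1) (n : ℕ) :
    mapDomainRingHom ℤ ρ (NN n g) = n := by
  simp [NN, hg, natCast_def]

lemma eq_zero_of_mul_NN_eq_zero {ρ : G →* G} {g : G} (hg : ρ g = 1) {n : ℕ} (hn : n ≠ 0)
    {f : MonoidAlgebra ℤ G} (hf : mapDomainRingHom ℤ ρ f = f) (h : f * NN n g = 0) : f = 0 := by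
  have := congrArg (mapDomainRingHom ℤ ρ) h
  rw [map_mul, hf, mapDomainRingHom_NN hg, map_zero, mul_comm, ← nsmul_eq_mul] at this
  exact (smul_eq_zero_iff_right hn).1 this

theorem exists_of_mul_sub_one_add_mul_sub_one_eq_zero {ρ : G →* G} {x y : G} {m n : ℕ}
    (hx : orderOf x = m) (hy : orderOf y = n) (hm : m ≠ 0) (hn : n ≠ 0)
    (hρx : ρ x = x) (hρy : ρ y = 1) (hρ : ∀ h, ∃ k : ℕ, h = ρ h * y ^ k)
    {a b : MonoidAlgebra ℤ G} (hab : a * (of ℤ G x - 1) + b * (of ℤ G y - 1) = 0) :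
    ∃ α c γ, a = α * (of ℤ G y - 1) + c * NN m x ∧
      b = -(α * (of ℤ G x - 1)) + γ * NN n y := by
  set φ := mapDomainRingHom ℤ ρ
  have hφφ : ∀ f, φ (φ f) = φ f := by
    have hρρ : ρ.comp ρ = ρ := MonoidHom.ext fun h => by
      obtain ⟨k, hk⟩ := hρ h
      conv_rhs => rw [hk]
      simp [hρy]
    intro f
    rw [← RingHom.comp_apply, ← mapDomainRingHom_comp, hρρ]
  have hφx : φ (of ℤ G x) = of ℤ G x := by simp [φ, hρx]
  have hNy : NN n y * (of ℤ G y - 1) = 0 := NN_mul n y (hy ▸ pow_orderOf_eq_one y)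
  obtain ⟨α, hα⟩ := sub_one_dvd_sub_mapDomainRingHom hρ a
  have ha₀ : φ a * (of ℤ G x - 1) = 0 := by
    refine eq_zero_of_mul_NN_eq_zero hρy hn (by rw [map_mul, map_sub, map_one, hφφ, hφx]) ?_
    linear_combination NN n y * hab - (b + α * (of ℤ G x - 1)) * hNy -
      NN n y * (of ℤ G x - 1) * hα
  obtain ⟨c, hc⟩ := exists_eq_mul_NN_of_mul_sub_one_eq_zero hx hm ha₀
  obtain ⟨γ, hγ⟩ := exists_eq_mul_NN_of_mul_sub_one_eq_zero hy hn
    (f := b + α * (of ℤ G x - 1)) (by linear_combination hab - (of ℤ G x - 1) * hα - ha₀)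
  exact ⟨α, c, γ, by linear_combination hα + hc, by linear_combination hγ⟩

end CommGroupRing

def G12t.fstRetraction (p : ℕ) : G12t p →* G12t p :=
  ((AddMonoidHom.inl (ZMod p) (ZMod p)).comp (AddMonoidHom.fst _ _)).toMultiplicative

lemma G12t.eq_fstRetraction_mul_t2_pow (p : ℕ) [NeZero p] (h : G12t p) :
    ∃ k : ℕ, h = G12t.fstRetraction p h * t2 p ^ k :=
  ⟨(Multiplicative.toAdd h).2.val,
    Multiplicative.toAdd.injective (by simp [G12t.fstRetraction, t2])⟩

lemma orderOf_t1 (p : ℕ) : orderOf (t1 p) = p := by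
  simp [t1, orderOf_ofAdd_eq_addOrderOf, Prod.addOrderOf_mk, ZMod.addOrderOf_one]

lemma orderOf_t2 (p : ℕ) : orderOf (t2 p) = p := by
  simp [t2, orderOf_ofAdd_eq_addOrderOf, Prod.addOrderOf_mk, ZMod.addOrderOf_one]

lemma mem_A2G12_iff (p : ℕ) (a b : R12 p) :
    (a, b) ∈ A2G12 p ↔ a * (of ℤ _ (t1 p) - 1) + b * (of ℤ _ (t2 p) - 1) = 0 := Iff.rfl

theorem statement0 (p : ℕ) (hp : p.Prime) :
    Submodule.span (R12 p) {u12raw p, b1raw p, b2raw p} = A2G12 p := by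
  have hp₀ := hp.ne_zero
  have : NeZero p := ⟨hp₀⟩
  refine le_antisymm (Submodule.span_le.2 ?_) fun ⟨a, b⟩ hab => ?_
  · rintro v (rfl | rfl | rfl)
    exacts [u12raw_mem p, b1raw_mem p, b2raw_mem p]
  obtain ⟨α, c, γ, ha, hb⟩ := exists_of_mul_sub_one_add_mul_sub_one_eq_zero (orderOf_t1 p)
    (orderOf_t2 p) hp₀ hp₀ rfl rfl (G12t.eq_fstRetraction_mul_t2_pow p)
    ((mem_A2G12_iff p a b).1 hab)
  have hrepr : (a, b) = α • u12raw p + c • b1raw p + γ • b2raw p := by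
    simp only [u12raw, b1raw, b2raw, Prod.smul_mk, Prod.mk_add_mk, smul_eq_mul, ha, hb]
    congr 1 <;> ring
  rw [hrepr]
  refine add_mem (add_mem ?_ ?_) ?_ <;>
    exact Submodule.smul_mem _ _ (Submodule.subset_span (by simp))
end
end

section
/- For every subgroup H ≤ G, H^1(H, Q) = 0; that is, the G-lattice Q = A_2(G12) ⊕ K3 ⊕ K4 is H^1-trivial. -/
open MonoidAlgebra

set_option maxHeartbeats 1000000
set_option synthInstance.maxHeartbeats 400000

noncomputable section

/-!
`Q` is the sum of `A₂(G₁₂)`, two copies of `A₂(C_p)` and two copies of `ℤ[C_p]`, and `H` acts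
on each summand through a homomorphism `χ` to an abelian group `A`. On `A₂(C_p) = ℤ·N` the action
is trivial, so a cocycle is a homomorphism from a finite group to a lattice, hence zero.
The kernel of `χ` acts trivially and `ℤ[A]` is free over the group ring of `C = χ(H)`,
so `H¹(H, ℤ[A]) = 0`. Finally `0 → A₂(G₁₂) → ℤ[G₁₂]² → I[G₁₂] → 0` identifies `H¹(H, A₂(G₁₂))`
with the cokernel of `(ℤ[G₁₂]²)^C → I[G₁₂]^C`, which is onto: the `C`-invariants of `ℤ[G₁₂]` are
the multiples of the norm `N_C`, and an invariant `N_C·r` of augmentation zero has `r ∈ I[G₁₂]`.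
-/

open Multiplicative

section Cocycle

variable {G M : Type*} [Group G] [AddCommGroup M] {act : G → M → M} {f : G → M}

lemma IsOneCocycle.map_pow_of_forall_act_eq (hf : IsOneCocycle act f) {k : G}
    (hk : ∀ m, act k m = m) (n : ℕ) : f (k ^ n) = n • f k := by
  induction n with
  | zero =>
    have h := hf k 1
    rw [mul_one, hk] at h
    simpa using h
  | succ n ih => rw [pow_succ', hf, hk, ih, succ_nsmul]

lemma IsOneCocycle.eq_zero_of_forall_act_eq [Finite G] [IsAddTorsionFree M]
    (hf : IsOneCocycle act f) {k : G} (hk : ∀ m, act k m = m) : f k = 0 := by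
  have h := hf.map_pow_of_forall_act_eq hk (Nat.card G)
  rw [pow_card_eq_one', ← pow_zero k, hf.map_pow_of_forall_act_eq hk 0, zero_smul] at h
  exact (nsmul_eq_zero_iff_right Nat.card_pos.ne').mp h.symm

end Cocycle

instance {R M : Type*} [Semiring R] [IsAddTorsionFree R] : IsAddTorsionFree (MonoidAlgebra R M) :=
  Function.Injective.isAddTorsionFree
    (coeffAddEquiv : MonoidAlgebra R M ≃+ (M →₀ R)).toAddMonoidHom coeffAddEquiv.injective

section GroupRingBasics

variable {G : Type*} [Group G]

@[simp]
lemma augGen_single (g : G) (a : ℤ) : augGen G (single g a) = a := by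
  simp [augGen]

lemma coeff_of_mul (g : G) (x : MonoidAlgebra ℤ G) (y : G) :
    (of ℤ G g * x).coeff y = x.coeff (g⁻¹ * y) := by
  rw [of_apply, coeff_single_mul_apply, one_mul]

lemma QuotientGroup.inv_mul_out_mem (C : Subgroup G) (x : G) :
    x⁻¹ * (x : G ⧸ C).out ∈ C :=
  QuotientGroup.eq.mp (QuotientGroup.out_eq' _).symm

end GroupRingBasics

section GroupRing

variable {A : Type*} [CommGroup A]

lemma QuotientGroup.mk_mul_of_mem_left {C : Subgroup A} {c : A} (hc : c ∈ C) (x : A) :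
    ((c * x : A) : A ⧸ C) = x := by
  rw [mul_comm, QuotientGroup.mk_mul_of_mem x hc]

variable {H : Type*} [Group H] [Finite H] (χ : H →* A)

lemma IsOneCocycle.eq_of_map_eq {f : H → MonoidAlgebra ℤ A}
    (hf : IsOneCocycle (fun h m => of ℤ A (χ h) * m) f) {h h' : H} (hχ : χ h = χ h') :
    f h = f h' := by
  have hk : f (h⁻¹ * h') = 0 :=
    hf.eq_zero_of_forall_act_eq fun m => by
      rw [map_mul, map_inv, hχ, inv_mul_cancel, map_one, one_mul]
  rw [← mul_inv_cancel_left h h', hf]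
  simp only [hk, mul_zero, zero_add]

/-- The primitive is `a(x) = -f(σ x)(x)`, where `χ (σ x) = x * rep(x)⁻¹` for a representative
`rep(x)` of `x` modulo `χ.range`; this works because `f` only depends on `χ`. -/
theorem IsOneCocycle.isOneCoboundary_monoidAlgebra [Finite A] {f : H → MonoidAlgebra ℤ A}
    (hf : IsOneCocycle (fun h m => of ℤ A (χ h) * m) f) :
    IsOneCoboundary (fun h m => of ℤ A (χ h) * m) f := by
  choose σ hσ using fun x : A =>
    χ.range.inv_mem (QuotientGroup.inv_mul_out_mem χ.range x)
  refine ⟨ofCoeff (Finsupp.equivFunOnFinite.symm fun x => -(f (σ x)).coeff x), fun h => ?_⟩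
  ext x
  have hσ_mul : f (σ ((χ h)⁻¹ * x)) = f (h⁻¹ * σ x) := by
    refine hf.eq_of_map_eq χ ?_
    rw [map_mul, map_inv, hσ, hσ, QuotientGroup.mk_mul_of_mem_left (χ.range.inv_mem ⟨h, rfl⟩)]
    simp only [mul_inv_rev, inv_inv]
    ac_rfl
  have hcoc := congrArg (fun m => m.coeff x) (hf h (h⁻¹ * σ x))
  simp only [mul_inv_cancel_left, coeff_add, Finsupp.add_apply, coeff_of_mul] at hcoc
  simp only [coeff_sub, Finsupp.sub_apply, coeff_of_mul,
    Finsupp.coe_equivFunOnFinite_symm, hσ_mul]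
  rw [hcoc]
  abel

end GroupRing

section Norm

variable {A : Type*} [CommGroup A] (C : Subgroup A) [Fintype C]

def subgroupNorm : MonoidAlgebra ℤ A := ∑ c : C, of ℤ A c

lemma of_mul_subgroupNorm {c : A} (hc : c ∈ C) : of ℤ A c * subgroupNorm C = subgroupNorm C := by
  simp only [subgroupNorm, Finset.mul_sum, ← map_mul]
  exact Fintype.sum_equiv (Equiv.mulLeft ⟨c, hc⟩) _ _ fun _ => rfl

lemma augGen_subgroupNorm : augGen A (subgroupNorm C) = Fintype.card C := by
  simp [subgroupNorm]

/-- An invariant element is the norm times its restriction to a set of coset representatives. -/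
lemma exists_eq_subgroupNorm_mul {z : MonoidAlgebra ℤ A} (hz : ∀ c ∈ C, of ℤ A c * z = z) :
    ∃ r, z = subgroupNorm C * r := by
  classical
  refine ⟨ofCoeff (z.coeff.filter fun x => (x : A ⧸ C).out = x), ?_⟩
  ext x
  obtain ⟨c₀, hc₀⟩ := QuotientGroup.mk_out_eq_mul C x
  simp only [subgroupNorm, Finset.sum_mul, coeff_sum, Finsupp.finsetSum_apply, coeff_of_mul,
    Finsupp.filter_apply, QuotientGroup.mk_mul_of_mem_left (C.inv_mem (SetLike.coe_mem _)), hc₀]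
  rw [Finset.sum_eq_single c₀⁻¹]
  · have hfix := congrArg (fun m => m.coeff x) (hz _ (C.inv_mem c₀.2))
    simp only [coeff_of_mul, inv_inv] at hfix
    rw [Subgroup.coe_inv, inv_inv, if_pos (mul_comm _ _), hfix]
  · intro b _ hb
    rw [if_neg]
    intro hbx
    apply hb
    rw [← inv_inj, inv_inv, ← Subtype.coe_inj]
    simpa [mul_comm x] using hbx.symm
  · exact fun h => (h (Finset.mem_univ _)).elim

end Norm

section AugmentationIdeal

variable {G : Type*} [Group G] (J : Ideal (MonoidAlgebra ℤ G))

lemma of_sub_one_mem_of_mem_closure {S : Set G} (hS : ∀ s ∈ S, of ℤ G s - 1 ∈ J) {g : G}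
    (hg : g ∈ Subgroup.closure S) : of ℤ G g - 1 ∈ J := by
  induction hg using Subgroup.closure_induction with
  | mem s hs => exact hS s hs
  | one => rw [map_one, sub_self]; exact J.zero_mem
  | mul x y _ _ hx hy =>
    have : of ℤ G (x * y) - 1 = of ℤ G x * (of ℤ G y - 1) + (of ℤ G x - 1) := by
      rw [map_mul, mul_sub, mul_one]; abel
    rw [this]
    exact J.add_mem (J.mul_mem_left _ hy) hx
  | inv x _ hx =>
    have : of ℤ G x⁻¹ - 1 = -(of ℤ G x⁻¹ * (of ℤ G x - 1)) := by
      rw [mul_sub, ← map_mul, inv_mul_cancel, map_one, mul_one, neg_sub]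
    rw [this]
    exact J.neg_mem (J.mul_mem_left _ hx)

lemma sub_augGen_mem (hJ : ∀ g, of ℤ G g - 1 ∈ J) (x : MonoidAlgebra ℤ G) :
    x - (augGen G x : MonoidAlgebra ℤ G) ∈ J := by
  induction x using MonoidAlgebra.induction_on with
  | of g => simpa using hJ g
  | add x y hx hy =>
    rw [map_add, Int.cast_add, add_sub_add_comm]
    exact J.add_mem hx hy
  | smul r x hx =>
    rw [map_zsmul, smul_eq_mul, Int.cast_mul, ← zsmul_eq_mul, ← smul_sub]
    exact J.smul_of_tower_mem r hx

end AugmentationIdeal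

section A2G12

variable {p : ℕ}

lemma t1_pow_mul_t2_pow [NeZero p] (g : G12t p) :
    t1 p ^ (toAdd g).1.val * t2 p ^ (toAdd g).2.val = g := by
  apply toAdd.injective
  simp [t1, t2, toAdd_pow, Prod.smul_mk]

lemma closure_t1_t2_eq_top [NeZero p] : Subgroup.closure {t1 p, t2 p} = ⊤ := by
  refine eq_top_iff.mpr fun g _ => ?_
  rw [← t1_pow_mul_t2_pow g]
  exact mul_mem (pow_mem (Subgroup.subset_closure (by simp)) _)
    (pow_mem (Subgroup.subset_closure (by simp)) _)

lemma d12map_apply (x : R12 p × R12 p) :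
    d12map p x = x.1 * (of ℤ (G12t p) (t1 p) - 1) + x.2 * (of ℤ (G12t p) (t2 p) - 1) := by
  simp [d12map]

lemma augGen_d12map (x : R12 p × R12 p) : augGen (G12t p) (d12map p x) = 0 := by
  simp [d12map_apply]

lemma exists_d12map_eq_of_augGen_eq_zero [NeZero p] {r : R12 p} (hr : augGen (G12t p) r = 0) :
    ∃ x, d12map p x = r := by
  set J := Ideal.span {of ℤ (G12t p) (t1 p) - 1, of ℤ (G12t p) (t2 p) - 1}
  have hgen : ∀ s ∈ ({t1 p, t2 p} : Set (G12t p)), of ℤ (G12t p) s - 1 ∈ J := by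
    rintro s (rfl | rfl) <;> exact Ideal.subset_span (by simp)
  have hmem := sub_augGen_mem J (fun g => of_sub_one_mem_of_mem_closure J hgen
    (by rw [closure_t1_t2_eq_top]; exact Subgroup.mem_top g)) r
  rw [hr, Int.cast_zero, sub_zero, Ideal.mem_span_pair] at hmem
  obtain ⟨a, b, hab⟩ := hmem
  exact ⟨(a, b), by rw [d12map_apply, hab]⟩

lemma exists_invariant_d12map_eq [NeZero p] (C : Subgroup (G12t p)) {z : R12 p}
    (hz : ∀ c ∈ C, of ℤ (G12t p) c * z = z) (haug : augGen (G12t p) z = 0) :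
    ∃ b : R12 p × R12 p, (∀ c ∈ C, of ℤ (G12t p) c • b = b) ∧ d12map p b = z := by
  have := Fintype.ofFinite C
  obtain ⟨r, rfl⟩ := exists_eq_subgroupNorm_mul C hz
  have hr : augGen (G12t p) r = 0 := by
    rw [map_mul, augGen_subgroupNorm] at haug
    exact (mul_eq_zero.mp haug).resolve_left (by exact_mod_cast Fintype.card_ne_zero)
  obtain ⟨x, rfl⟩ := exists_d12map_eq_of_augGen_eq_zero hr
  refine ⟨subgroupNorm C • x, fun c hc => ?_, by rw [map_smul, smul_eq_mul]⟩
  rw [smul_smul, of_mul_subgroupNorm C hc]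

theorem IsOneCocycle.isOneCoboundary_A2G12 [NeZero p] {H : Type*} [Group H] [Finite H]
    (χ : H →* G12t p) {f : H → A2G12 p} (hf : IsOneCocycle (fun h v => of ℤ (G12t p) (χ h) • v) f) :
    IsOneCoboundary (fun h v => of ℤ (G12t p) (χ h) • v) f := by
  obtain ⟨a₁, ha₁⟩ := IsOneCocycle.isOneCoboundary_monoidAlgebra χ (f := fun h => (f h).1.1)
    fun g h => congrArg (fun v : A2G12 p => v.1.1) (hf g h)
  obtain ⟨a₂, ha₂⟩ := IsOneCocycle.isOneCoboundary_monoidAlgebra χ (f := fun h => (f h).1.2)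
    fun g h => congrArg (fun v : A2G12 p => v.1.2) (hf g h)
  have hfa : ∀ h, ((f h) : R12 p × R12 p) = of ℤ (G12t p) (χ h) • (a₁, a₂) - (a₁, a₂) :=
    fun h => Prod.ext (ha₁ h) (ha₂ h)
  have hz : ∀ c ∈ χ.range, of ℤ (G12t p) c * d12map p (a₁, a₂) = d12map p (a₁, a₂) := by
    rintro _ ⟨h, rfl⟩
    have h0 : d12map p (f h) = 0 := (f h).2
    rw [hfa, map_sub, map_smul, smul_eq_mul, sub_eq_zero] at h0
    exact h0
  obtain ⟨b, hb_inv, hb⟩ := exists_invariant_d12map_eq χ.range hz (augGen_d12map _)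
  refine ⟨⟨(a₁, a₂) - b, by simp [A2G12, hb]⟩, fun h => Subtype.ext ?_⟩
  change ((f h) : R12 p × R12 p) = of ℤ (G12t p) (χ h) • ((a₁, a₂) - b) - ((a₁, a₂) - b)
  rw [hfa, smul_sub, hb_inv _ ⟨h, rfl⟩]
  abel

end A2G12

section A2C

variable {p : ℕ} [NeZero p]

lemma c1g_pow_toAdd_val (u : Cpt p) : c1g p ^ (toAdd u).val = u := by
  apply toAdd.injective
  simp [c1g]

lemma of_smul_A2C (u : Cpt p) (v : A2C p) : of ℤ (Cpt p) u • v = v := by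
  have hσ : of ℤ (Cpt p) (c1g p) * v = v := by
    have h0 : dcmap p v = 0 := v.2
    rw [dcmap, LinearMap.toSpanSingleton_apply, smul_eq_mul, mul_sub, mul_one, sub_eq_zero,
      mul_comm] at h0
    exact h0
  refine Subtype.ext ?_
  change of ℤ (Cpt p) u * v = v
  rw [← c1g_pow_toAdd_val u, map_pow]
  induction (toAdd u).val with
  | zero => rw [pow_zero, one_mul]
  | succ n ih => rw [pow_succ, mul_assoc, hσ, ih]

lemma IsOneCocycle.eq_zero_A2C {H : Type*} [Group H] [Finite H] (ψ : H →* Cpt p)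
    {f : H → A2C p} (hf : IsOneCocycle (fun h v => of ℤ (Cpt p) (ψ h) • v) f) (h : H) :
    f h = 0 := by
  have : IsAddTorsionFree (A2C p) :=
    Subtype.val_injective.isAddTorsionFree (A2C p).subtype.toAddMonoidHom
  exact hf.eq_zero_of_forall_act_eq (of_smul_A2C _)

end A2C

theorem statement3_general (p : ℕ) [NeZero p]
    (H : Subgroup (Gp p)) (f : H → Qc p)
    (hf : IsOneCocycle (resAct H (actQ p)) f) :
    IsOneCoboundary (resAct H (actQ p)) f := by
  obtain ⟨a, ha⟩ := IsOneCocycle.isOneCoboundary_A2G12 ((π12 p).comp H.subtype)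
    (f := fun h => (f h).1) fun g h => congrArg (·.1) (hf g h)
  have h3 := IsOneCocycle.eq_zero_A2C ((π3 p).comp H.subtype)
    (f := fun h => (f h).2.1.1) fun g h => congrArg (·.2.1.1) (hf g h)
  obtain ⟨b₃, hb₃⟩ := IsOneCocycle.isOneCoboundary_monoidAlgebra ((π3 p).comp H.subtype)
    (f := fun h => (f h).2.1.2) fun g h => congrArg (·.2.1.2) (hf g h)
  have h4 := IsOneCocycle.eq_zero_A2C ((π4 p).comp H.subtype)
    (f := fun h => (f h).2.2.1) fun g h => congrArg (·.2.2.1) (hf g h)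
  obtain ⟨b₄, hb₄⟩ := IsOneCocycle.isOneCoboundary_monoidAlgebra ((π4 p).comp H.subtype)
    (f := fun h => (f h).2.2.2) fun g h => congrArg (·.2.2.2) (hf g h)
  refine ⟨(a, (0, b₃), (0, b₄)), fun h => ?_⟩
  simp only [resAct, actQ, smul_zero]
  exact Prod.ext (ha h) (Prod.ext (Prod.ext (h3 h) (hb₃ h)) (Prod.ext (h4 h) (hb₄ h)))

theorem statement3 (p : ℕ) [NeZero p] (hp : p.Prime) (hodd : p ≠ 2)
    (H : Subgroup (Gp p)) (f : H → Qc p)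
    (hf : IsOneCocycle (resAct H (actQ p)) f) :
    IsOneCoboundary (resAct H (actQ p)) f :=
  statement3_general p H f hf

end
end

section
/- For j ∈ {3, 4} and every subgroup H ≤ G, the order of res^G_H(inf([c_{⟨σj⟩}])) in H^2(H, A_2(⟨σj⟩)) equals |H_j|; in particular it equals p when H_j is nontrivial and 1 otherwise. -/
open MonoidAlgebra

set_option maxHeartbeats 1000000
set_option synthInstance.maxHeartbeats 400000

noncomputable section

/-!
`A₂(⟨σ⟩) = ℤ·N` carries the trivial action, and the canonical cocycle is
`(x, y) ↦ carry(x, y)·N`, where `carry(x, y) ∈ {0, 1}` is the carry in adding the exponents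
of `x, y` below `p`. If `Hⱼ = 1` its restriction vanishes. Otherwise
`p·carry = δ(h ↦ val(π h))`, so `p·c` is a coboundary; and if `n·carry = δc`, then
`p·c - n·(val ∘ π)` is a homomorphism from the finite group `H` to `ℤ`, hence zero, which
evaluated at an `h` with `π h ≠ 1` gives `p ∣ n`.
-/

theorem ZMod.val_add_val_eq_val_add_ite {n : ℕ} [NeZero n] (a b : ZMod n) :
    a.val + b.val = (a + b).val + if n ≤ a.val + b.val then n else 0 := by
  split_ifs with h
  · exact ZMod.val_add_val_of_le h
  · rw [ZMod.val_add_of_lt (not_le.1 h), add_zero]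

namespace A2C

variable {p : ℕ}

theorem of_smul_eq_self [NeZero p] (x : Cpt p) (v : A2C p) : of ℤ (Cpt p) x • v = v := by
  have hσ : (v : RCp p) * of ℤ (Cpt p) (c1g p) = v := by
    have hv : (v : RCp p) * (of ℤ (Cpt p) (c1g p) - 1) = 0 := v.2
    rwa [mul_sub, mul_one, sub_eq_zero] at hv
  have hσpow : ∀ k : ℕ, (v : RCp p) * of ℤ (Cpt p) (c1g p ^ k) = v := by
    intro k
    induction k with
    | zero => rw [pow_zero, map_one, mul_one]
    | succ k ih => rw [pow_succ, map_mul, ← mul_assoc, ih, hσ]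
  have hx : c1g p ^ (Multiplicative.toAdd x).val = x := by
    rw [c1g, ← ofAdd_nsmul, nsmul_one, ZMod.natCast_zmod_val]; rfl
  ext1
  change of ℤ (Cpt p) x * (v : RCp p) = v
  rw [mul_comm, ← hx, hσpow]

/-- `A₂(⟨σ⟩) = ℤ·N`, and this reads off the coordinate of an element along `N`. -/
def coeffOne (p : ℕ) : A2C p →+ ℤ :=
  (Finsupp.applyAddHom 1).comp
    (coeffAddEquiv.toAddMonoidHom.comp (A2C p).subtype.toAddMonoidHom)

theorem coeffOne_NCe [NeZero p] : coeffOne p (NCe p) = 1 := by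
  have hpow_ne_one : ∀ k < p, k ≠ 0 → c1g p ^ k ≠ 1 := by
    intro k hkp hk0 h
    rw [c1g, ← ofAdd_nsmul, nsmul_one] at h
    exact hk0 (Nat.eq_zero_of_dvd_of_lt
      ((ZMod.natCast_eq_zero_iff k p).1 (Multiplicative.ofAdd.injective h)) hkp)
  change (NN p (c1g p)).coeff 1 = 1
  rw [NN, coeff_sum, Finsupp.finsetSum_apply,
    Finset.sum_eq_single_of_mem 0 (Finset.mem_range.2 (NeZero.pos p))]
  · simp
  · intro k hk hk0
    rw [← map_pow, of_apply, coeff_single,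
      Finsupp.single_eq_of_ne' (hpow_ne_one k (Finset.mem_range.1 hk) hk0)]

end A2C

section CanonicalCocycle

variable {p : ℕ} [NeZero p] {K : Type*} [Group K] {act : K → A2C p → A2C p}

theorem coeffOne_ccyc (x y : Cpt p) :
    A2C.coeffOne p (ccyc p x y) =
      if p ≤ (Multiplicative.toAdd x).val + (Multiplicative.toAdd y).val then 1 else 0 := by
  unfold ccyc
  split_ifs
  · exact A2C.coeffOne_NCe
  · exact map_zero _

theorem ccyc_one_left (y : Cpt p) : ccyc p 1 y = 0 :=
  if_neg (by simpa using ZMod.val_lt (Multiplicative.toAdd y))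

theorem isTwoCoboundary_smul_ccyc_of_forall_eq_one (hact : ∀ g, act g 0 = 0) {f : K →* Cpt p}
    (hf : ∀ g, f g = 1) (n : ℕ) : IsTwoCoboundary act fun g h => n • ccyc p (f g) (f h) :=
  ⟨0, fun g h => by simp [hf, ccyc_one_left, hact]⟩

theorem isTwoCoboundary_p_smul_ccyc (hact : ∀ g v, act g v = v) (f : K →* Cpt p) :
    IsTwoCoboundary act fun g h => p • ccyc p (f g) (f h) := by
  refine ⟨fun g => (Multiplicative.toAdd (f g)).val • NCe p, fun g h => ?_⟩
  dsimp only
  rw [hact, map_mul, toAdd_mul, sub_add_eq_add_sub, eq_sub_iff_add_eq, ← add_smul,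
    add_comm (Multiplicative.toAdd (f h)).val, ZMod.val_add_val_eq_val_add_ite, ccyc]
  split_ifs <;> simp [add_smul, add_comm]

theorem dvd_of_isTwoCoboundary_smul_ccyc (hp : p.Prime) (hact : ∀ g v, act g v = v)
    (f : K →* Cpt p) {k : K} (hk : IsOfFinOrder k) (hfk : f k ≠ 1) {n : ℕ}
    (hn : IsTwoCoboundary act fun g h => n • ccyc p (f g) (f h)) : p ∣ n := by
  obtain ⟨c, hc⟩ := hn
  -- `e` is additive since `δc = n • ccyc` and `δ(g ↦ val (f g) • N) = p • ccyc`.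
  set e : K → ℤ := fun g =>
    p * A2C.coeffOne p (c g) - n * (Multiplicative.toAdd (f g)).val with he_def
  have he : ∀ g h, e (g * h) = e g + e h := by
    intro g h
    have hgh := congrArg (A2C.coeffOne p) (hc g h)
    rw [hact, map_nsmul, coeffOne_ccyc, map_add, map_sub] at hgh
    have hcarry := congrArg (Nat.cast : ℕ → ℤ)
      (ZMod.val_add_val_eq_val_add_ite (Multiplicative.toAdd (f g)) (Multiplicative.toAdd (f h)))
    simp only [he_def, map_mul, toAdd_mul]
    split_ifs at hgh hcarry <;> push_cast at hgh hcarry <;>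
      linear_combination (p : ℤ) * hgh + (n : ℤ) * hcarry
  let E : K →* Multiplicative ℤ :=
    MonoidHom.mk' (fun g => Multiplicative.ofAdd (e g)) fun g h => by rw [he]; rfl
  have hek : e k = 0 := (E.isOfFinOrder hk).eq_one'
  have hmod := congrArg (Int.cast : ℤ → ZMod p) hek
  push_cast [he_def, ZMod.natCast_self, ZMod.natCast_zmod_val] at hmod
  have : Fact p.Prime := ⟨hp⟩
  rw [zero_mul, zero_sub, neg_eq_zero, mul_eq_zero] at hmod
  exact (ZMod.natCast_eq_zero_iff n p).1 (hmod.resolve_right hfk)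

end CanonicalCocycle

theorem statement6_general (p : ℕ) [NeZero p] (hp : p.Prime)
    (π : Gp p →* Cpt p) (H : Subgroup (Gp p)) :
    (IsTwoCoboundary (resAct H (actCvia p π))
      (fun h h' => (Nat.card (H.map π)) • ccyc p (π (h : Gp p)) (π (h' : Gp p))) ∧
     ∀ n : ℕ, 0 < n →
      IsTwoCoboundary (resAct H (actCvia p π))
        (fun h h' => n • ccyc p (π (h : Gp p)) (π (h' : Gp p))) →
      (Nat.card (H.map π)) ∣ n) ∧
    (H.map π = ⊥ → Nat.card (H.map π) = 1) ∧
    (H.map π ≠ ⊥ → Nat.card (H.map π) = p) := by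
  have hact : ∀ (h : H) v, resAct H (actCvia p π) h v = v := fun _ _ => A2C.of_smul_eq_self _ _
  have hcard_dvd : Nat.card (H.map π) ∣ p := by
    simpa [Nat.card_eq_fintype_card] using Subgroup.card_subgroup_dvd_card (H.map π)
  have hcard_of_ne_bot (hbot : H.map π ≠ ⊥) : Nat.card (H.map π) = p :=
    ((Nat.dvd_prime hp).1 hcard_dvd).resolve_left (Subgroup.card_eq_one.not.2 hbot)
  refine ⟨?_, Subgroup.card_eq_one.2, hcard_of_ne_bot⟩
  by_cases hbot : H.map π = ⊥
  · have hf : ∀ h : H, (π.comp H.subtype) h = 1 := fun h =>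
      (Subgroup.map_eq_bot_iff H).1 hbot h.2
    rw [Subgroup.card_eq_one.2 hbot]
    exact ⟨isTwoCoboundary_smul_ccyc_of_forall_eq_one (fun h => hact h 0) hf 1,
      fun n _ _ => one_dvd n⟩
  · obtain ⟨⟨_, ⟨k, hkH, rfl⟩⟩, hk⟩ := Subgroup.ne_bot_iff_exists_ne_one.1 hbot
    rw [hcard_of_ne_bot hbot]
    exact ⟨isTwoCoboundary_p_smul_ccyc hact (π.comp H.subtype), fun n _ hn =>
      dvd_of_isTwoCoboundary_smul_ccyc hp hact (π.comp H.subtype)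
        (isOfFinOrder_of_finite ⟨k, hkH⟩) (fun h => hk (Subtype.ext h)) hn⟩

theorem statement6 (p : ℕ) [NeZero p] (hp : p.Prime) (hodd : p ≠ 2)
    (π : Gp p →* Cpt p) (hπ : π = π3 p ∨ π = π4 p) (H : Subgroup (Gp p)) :
    (IsTwoCoboundary (resAct H (actCvia p π))
      (fun h h' => (Nat.card (H.map π)) • ccyc p (π (h : Gp p)) (π (h' : Gp p))) ∧
     ∀ n : ℕ, 0 < n →
      IsTwoCoboundary (resAct H (actCvia p π))
        (fun h h' => n • ccyc p (π (h : Gp p)) (π (h' : Gp p))) →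
      (Nat.card (H.map π)) ∣ n) ∧
    (H.map π = ⊥ → Nat.card (H.map π) = 1) ∧
    (H.map π ≠ ⊥ → Nat.card (H.map π) = p) :=
  statement6_general p hp π H

end
end
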